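/- arXiv:2602.22037 — 2 statements merged into one kernel-verified Lean document; each statement's English description precedes it below -/
import Mathlib

section
/- In BFV, decryption is correct whenever the ciphertext noise bound (2n+1)·B satisfies (2n+1)·B < q/(2t) − t/2. More precisely: if [c0 + c1·s]_q = Δm + e_ct with ||e_ct|| ≤ (2n+1)B < q/(2t) − t/2, Δ = ⌊q/t⌋, and ||m|| ≤ t/2, then ⌊(t/q)·(Δm + e_ct)⌉ = m coefficient-wise. -/
open Finset

/-- Negacyclic convolution: multiplication in ℤ[x]/(x^n+1) on coefficient vectors. -/
def negmul {n : ℕ} (a b : Fin n → ℤ) : Fin n → ℤ :=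
  fun k => ∑ i : Fin n, ∑ j : Fin n,
    if ((i : ℕ) + (j : ℕ)) % n = (k : ℕ) then
      (if (i : ℕ) + (j : ℕ) < n then a i * b j else -(a i * b j))
    else 0

/-- BFV decryption correctness: if ‖e_ct‖ ≤ (2n+1)B < q/(2t) − t/2 then rounding recovers m. -/
theorem bfv_decryption_correct
    (n q t Δ : ℕ) (hqt : q > t) (ht : 2 ≤ t) (hΔ : Δ = q / t)
    (B : ℤ) (m ect : Fin n → ℤ)
    (hm : ∀ k, (|m k| : ℚ) ≤ (t : ℚ) / 2)
    (hect : ∀ k, (|ect k| : ℚ) ≤ (2 * (n : ℚ) + 1) * (B : ℚ))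
    (hnoise : (2 * (n : ℚ) + 1) * (B : ℚ) < (q : ℚ) / (2 * t) - (t : ℚ) / 2) :
    ∀ k, round ((t : ℚ) / (q : ℚ) * ((Δ : ℚ) * (m k : ℚ) + (ect k : ℚ))) = m k := by
  intro k
  have hqn : 0 < q := by omega
  have hq0 : (0:ℚ) < q := by exact_mod_cast hqn
  have ht0 : (0:ℚ) < t := by positivity
  have hd1 : t * Δ ≤ q := by rw [hΔ]; exact Nat.mul_div_le q t
  have hd2 : q < t * Δ + t := by
    rw [hΔ]
    have h := Nat.div_add_mod q t
    have h2 := Nat.mod_lt q (show 0 < t by omega)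
    omega
  have h1 : 0 ≤ (q:ℚ) - t * Δ := by
    have : (t*Δ : ℚ) ≤ q := by exact_mod_cast hd1
    linarith
  have h2 : (q:ℚ) - t * Δ < t := by
    have : (q:ℚ) < t*Δ + t := by exact_mod_cast hd2
    linarith
  set x : ℚ := (t : ℚ) / (q : ℚ) * ((Δ : ℚ) * (m k : ℚ) + (ect k : ℚ)) with hx
  have key : |x - (m k : ℚ)| < 1/2 := by
    have hxe : x - (m k : ℚ) = (((t:ℚ)*Δ - q) * (m k) + t * (ect k)) / q := by
      rw [hx]; field_simp; ring
    rw [hxe, abs_div, abs_of_pos hq0, div_lt_iff₀ hq0]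
    have habs : |((t:ℚ)*Δ - q) * (m k) + t * (ect k)| ≤
        |(t:ℚ)*Δ - q| * |(m k : ℚ)| + t * |(ect k : ℚ)| := by
      calc _ ≤ |((t:ℚ)*Δ - q) * (m k)| + |(t:ℚ) * (ect k)| := abs_add_le _ _
        _ = |(t:ℚ)*Δ - q| * |(m k : ℚ)| + t * |(ect k : ℚ)| := by
            rw [abs_mul, abs_mul, abs_of_pos ht0]
    have hab : |(t:ℚ)*Δ - q| ≤ t := by
      rw [abs_sub_comm, abs_of_nonneg h1] at *
      · linarith
    have hmk := hm k
    have hek := (hect k).trans_lt hnoise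
    have hmk0 : (0:ℚ) ≤ |(m k : ℚ)| := abs_nonneg _
    have hfield : (t:ℚ) * ((q:ℚ)/(2*t) - t/2) = q/2 - t*t/2 := by
      field_simp
    have h3 := mul_le_mul hab hmk hmk0 (le_of_lt ht0)
    have h4 := mul_lt_mul_of_pos_left hek ht0
    linarith
  have hz : round (x - (m k : ℚ)) = 0 := by
    rw [round_eq_zero_iff]
    constructor
    · linarith [neg_abs_le (x - (m k : ℚ)), key]
    · linarith [le_abs_self (x - (m k : ℚ))]
  have : round (x - (m k : ℚ) + (m k : ℚ)) = round (x - (m k : ℚ)) + m k := by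
    exact_mod_cast round_add_intCast (x - (m k : ℚ)) (m k)
  rw [sub_add_cancel] at this
  rw [this, hz, zero_add]
end

section
/- If the total decryption value d satisfies d = Δm + e with ||e|| ≤ B_ct^MP and (2t)·B_ct^MP + t^2 < q with ||m|| ≤ t/2 and Δ = ⌊q/t⌋, then the BFV-style multiparty decryption ⌊(t/q)·d⌉ mod t recovers m exactly. -/
open Finset

/-- Multiparty BFV decryption correctness: ⌊(t/q)·d⌉ mod t recovers m. -/
theorem multiparty_bfv_decryption_correct
    (n q t Δ : ℕ) (hqt : q > t) (ht : 2 ≤ t) (hΔ : Δ = q / t)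
    (BMP : ℤ) (m e d : Fin n → ℤ)
    (hd : d = (Δ : ℤ) • m + e)
    (he : ∀ k, |e k| ≤ BMP)
    (hm : ∀ k, -((t : ℚ) / 2) < (m k : ℚ) ∧ (m k : ℚ) ≤ (t : ℚ) / 2)
    (hnoise : 2 * (t : ℤ) * BMP + (t : ℤ) ^ 2 < (q : ℤ)) :
    ∀ k, ((round ((t : ℚ) / (q : ℚ) * (d k : ℚ)) : ℤ) : ZMod t) = ((m k : ℤ) : ZMod t) := by
  intro k
  have hq0 : 0 < (q : ℚ) := by
    have : 0 < q := by omega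
    exact_mod_cast this
  have ht0 : 0 < (t : ℚ) := by
    have : 0 < t := by omega
    exact_mod_cast this
  have hdm : t * Δ + q % t = q := by rw [hΔ]; exact Nat.div_add_mod q t
  set r : ℤ := (q : ℤ) - (t : ℤ) * (Δ : ℤ) with hr
  have hrq : r = ((q % t : ℕ) : ℤ) := by
    rw [hr]
    have : ((t * Δ : ℕ) : ℤ) + ((q % t : ℕ) : ℤ) = (q : ℤ) := by exact_mod_cast hdm
    push_cast at this ⊢
    linarith
  have hr0 : 0 ≤ r := by rw [hrq]; positivity
  have hrt : r ≤ (t : ℤ) - 1 := by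
    rw [hrq]
    have h1 : q % t < t := Nat.mod_lt _ (by omega)
    have : ((q % t : ℕ) : ℤ) < (t : ℤ) := by exact_mod_cast h1
    linarith
  set ε : ℚ := (((t : ℤ) * e k - r * m k : ℤ) : ℚ) / q with hε
  have hdk : (t : ℚ) / (q : ℚ) * (d k : ℚ) = ((m k : ℤ) : ℚ) + ε := by
    have hdk' : d k = (Δ : ℤ) * m k + e k := by rw [hd]; simp [smul_eq_mul]
    have hrc : ((r : ℤ) : ℚ) = (q : ℚ) - (t : ℚ) * (Δ : ℚ) := by rw [hr]; push_cast; ring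
    rw [hε, hdk']
    push_cast
    rw [hrc]
    field_simp
    ring
  have hmk := hm k
  have hek := he k
  have habs : |(((t : ℤ) * e k - r * m k : ℤ) : ℚ)| < (q : ℚ) / 2 := by
    have h1 : |(t : ℚ) * (e k : ℚ)| ≤ (t : ℚ) * (BMP : ℚ) := by
      rw [abs_mul, abs_of_nonneg ht0.le]
      have : |(e k : ℚ)| ≤ (BMP : ℚ) := by exact_mod_cast hek
      nlinarith
    have hrQ0 : (0:ℚ) ≤ (r : ℚ) := by exact_mod_cast hr0
    have h2 : |(r : ℚ) * (m k : ℚ)| ≤ (r : ℚ) * ((t : ℚ) / 2) := by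
      rw [abs_mul, abs_of_nonneg hrQ0]
      have hmabs : |(m k : ℚ)| ≤ (t : ℚ) / 2 := abs_le.mpr ⟨le_of_lt hmk.1, hmk.2⟩
      nlinarith
    have h3 : |(((t : ℤ) * e k - r * m k : ℤ) : ℚ)| ≤
        |(t : ℚ) * (e k : ℚ)| + |(r : ℚ) * (m k : ℚ)| := by
      push_cast
      exact abs_sub _ _
    have hrQ : (r : ℚ) ≤ (t : ℚ) - 1 := by exact_mod_cast hrt
    have hn : 2 * (t : ℚ) * (BMP : ℚ) + (t : ℚ) ^ 2 < (q : ℚ) := by exact_mod_cast hnoise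
    nlinarith
  have hεlt : |ε| < 1 / 2 := by
    rw [hε, abs_div, abs_of_nonneg hq0.le, div_lt_div_iff₀ hq0 (by norm_num : (0:ℚ) < 2)]
    nlinarith
  have hround : round ((t : ℚ) / (q : ℚ) * (d k : ℚ)) = (m k : ℤ) := by
    rw [hdk, round_intCast_add]
    have h0 : round ε = 0 := by
      rw [round_eq_zero_iff, Set.mem_Ico]
      obtain ⟨hl, hu⟩ := abs_lt.mp hεlt
      exact ⟨by linarith, by linarith⟩
    omega
  rw [hround]
end
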